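/- arXiv:1809.02955 — 6 statements merged into one kernel-verified Lean document; each statement's English description precedes it below -/
import Mathlib

section
/- Let N be an integer with N ≥ 1 and let 1 ≤ n < m ≤ N be integers. Then the Lebesgue measure of the set of x ∈ [0,1]^N such that x_n = max{x_1,…,x_n}, x_i < x_n for all i with n < i < m, and x_m > x_n, equals 1/(m(m-1)). (Since the event {x_n = max{x_1,…,x_n}} has measure 1/n, this yields the transition probability p_{n,m} = n/(m(m-1)) of the record-time Markov chain observed by the no-information player.) -/
open MeasureTheory Set ENNReal

/-- The interval constraint for coordinate with 0-based index `j`, given pivot value `t`. -/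
def auxT (n m : ℕ) (j : ℕ) (t : ℝ) : Set ℝ :=
  if j + 1 ≤ n then Icc 0 t else if j + 1 < m then Ico 0 t
  else if j + 1 = m then Ioc t 1 else Icc 0 1

lemma auxT_vol (n m : ℕ) (hnm : n < m) (j : ℕ) {t : ℝ} (ht : t ∈ Icc (0:ℝ) 1) :
    volume (auxT n m j t) =
      (if j + 1 < m then ENNReal.ofReal t else if j + 1 = m then ENNReal.ofReal (1 - t) else 1) := by
  have ht1 := ht.2
  by_cases h2 : j + 1 < m
  · rw [if_pos h2]
    by_cases h1 : j + 1 ≤ n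
    · rw [show auxT n m j t = Icc 0 t by simp only [auxT, if_pos h1], Real.volume_Icc, sub_zero]
    · rw [show auxT n m j t = Ico 0 t by simp only [auxT, if_neg h1, if_pos h2],
        Real.volume_Ico, sub_zero]
  · rw [if_neg h2]
    by_cases h3 : j + 1 = m
    · rw [if_pos h3, show auxT n m j t = Ioc t 1 by
        simp only [auxT, if_neg (show ¬ j + 1 ≤ n by omega), if_neg h2, if_pos h3],
        Real.volume_Ioc]
    · rw [if_neg h3, show auxT n m j t = Icc 0 1 by
        simp only [auxT, if_neg (show ¬ j + 1 ≤ n by omega), if_neg h2, if_neg h3],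
        Real.volume_Icc]
      norm_num

lemma aux_integral (a : ℕ) : ∫ t in (0:ℝ)..1, t ^ a * (1 - t) = 1 / ((a + 1) * (a + 2)) := by
  have h : ∀ t : ℝ, t ^ a * (1 - t) = t ^ a - t ^ (a + 1) := fun t => by ring
  simp_rw [h]
  rw [intervalIntegral.integral_sub (intervalIntegral.intervalIntegrable_pow a)
    (intervalIntegral.intervalIntegrable_pow (a + 1)), integral_pow, integral_pow]
  have h1 : ((a : ℝ) + 1) ≠ 0 := by positivity
  have h2 : ((a : ℝ) + 2) ≠ 0 := by positivity
  rw [one_pow, one_pow, zero_pow (by omega), zero_pow (by omega)]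
  push_cast
  rw [show ((a : ℝ) + 1 + 1) = (a : ℝ) + 2 by ring]
  rw [div_sub_div _ _ h1 h2, div_eq_div_iff (by positivity) (by positivity)]
  ring

/-- For `1 ≤ n < m ≤ N`, the Lebesgue measure of the set of `x ∈ [0,1]^N` such that
`x_n = max{x_1,…,x_n}`, `x_i < x_n` for all `n < i < m`, and `x_m > x_n`
equals `1/(m(m-1))` (indices are 1-based; coordinate `i : Fin N` carries index `i+1`). -/
theorem stmt_0 (N n m : ℕ) (hN : 1 ≤ N) (hn : 1 ≤ n) (hnm : n < m) (hmN : m ≤ N) :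
    volume {x : Fin N → ℝ |
        (∀ i, x i ∈ Icc (0:ℝ) 1) ∧
        (∀ i : Fin N, (i : ℕ) + 1 ≤ n → x i ≤ x ⟨n - 1, by omega⟩) ∧
        (∀ i : Fin N, n < (i : ℕ) + 1 → (i : ℕ) + 1 < m → x i < x ⟨n - 1, by omega⟩) ∧
        x ⟨n - 1, by omega⟩ < x ⟨m - 1, by omega⟩} =
      1 / ((m : ℝ≥0∞) * ((m : ℝ≥0∞) - 1)) := by
  classical
  have hm2 : 2 ≤ m := by omega
  obtain ⟨N', rfl⟩ : ∃ N', N = N' + 1 := ⟨N - 1, by omega⟩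
  set k : Fin (N' + 1) := ⟨n - 1, by omega⟩ with hk
  set l : Fin (N' + 1) := ⟨m - 1, by omega⟩ with hl
  -- target set in the split space
  set S' : Set (ℝ × (Fin N' → ℝ)) :=
    {p | p.1 ∈ Icc (0:ℝ) 1 ∧ ∀ j : Fin N', p.2 j ∈ auxT n m ((k.succAbove j : Fin (N'+1)) : ℕ) p.1}
      with hS'def
  have hS' : MeasurableSet S' := by
    rw [show S' = ({p : ℝ × (Fin N' → ℝ) | p.1 ∈ Icc (0:ℝ) 1}
        ∩ ⋂ j : Fin N',
            {p : ℝ × (Fin N' → ℝ) | p.2 j ∈ auxT n m ((k.succAbove j : Fin (N'+1)) : ℕ) p.1})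
        from by ext p; simp [hS'def, mem_iInter]]
    refine (measurable_fst measurableSet_Icc).inter (MeasurableSet.iInter fun j => ?_)
    have hsnd : Measurable fun p : ℝ × (Fin N' → ℝ) => p.2 j :=
      (measurable_pi_apply j).comp measurable_snd
    simp only [auxT]
    split_ifs
    · simp only [Set.mem_Icc, Set.setOf_and]
      exact (measurableSet_le measurable_const hsnd).inter
        (measurableSet_le hsnd measurable_fst)
    · simp only [Set.mem_Ico, Set.setOf_and]
      exact (measurableSet_le measurable_const hsnd).inter
        (measurableSet_lt hsnd measurable_fst)
    · simp only [Set.mem_Ioc, Set.setOf_and]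
      exact (measurableSet_lt measurable_fst hsnd).inter
        (measurableSet_le hsnd measurable_const)
    · simp only [Set.mem_Icc, Set.setOf_and]
      exact (measurableSet_le measurable_const hsnd).inter
        (measurableSet_le hsnd measurable_const)
  -- the splitting map
  set e := MeasurableEquiv.piFinSuccAbove (fun _ : Fin (N' + 1) => ℝ) k with he_def
  have he : MeasurePreserving (⇑e) volume volume :=
    volume_preserving_piFinSuccAbove (fun _ : Fin (N' + 1) => ℝ) k
  have hmem : ∀ x : Fin (N' + 1) → ℝ, e x ∈ S' ↔
      (x k ∈ Icc (0:ℝ) 1 ∧ ∀ j : Fin N',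
        x (k.succAbove j) ∈ auxT n m ((k.succAbove j : Fin (N'+1)) : ℕ) (x k)) := fun x =>
    Iff.rfl
  -- rewrite the set as a preimage
  have hSeq : {x : Fin (N' + 1) → ℝ |
        (∀ i, x i ∈ Icc (0:ℝ) 1) ∧
        (∀ i : Fin (N' + 1), (i : ℕ) + 1 ≤ n → x i ≤ x k) ∧
        (∀ i : Fin (N' + 1), n < (i : ℕ) + 1 → (i : ℕ) + 1 < m → x i < x k) ∧
        x k < x l} = ⇑e ⁻¹' S' := by
    ext x
    rw [mem_preimage, hmem x]
    simp only [mem_setOf_eq]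
    constructor
    · rintro ⟨h0, h1, h2, h3⟩
      refine ⟨h0 k, fun j => ?_⟩
      set i : Fin (N' + 1) := k.succAbove j with hi
      simp only [auxT]
      split_ifs with c1 c2 c3
      · exact ⟨(h0 i).1, h1 i c1⟩
      · exact ⟨(h0 i).1, h2 i (by omega) c2⟩
      · have hil : i = l := Fin.ext (show (i : ℕ) = m - 1 by omega)
        rw [hil]
        exact ⟨h3, (h0 l).2⟩
      · exact h0 i
    · rintro ⟨hk0, hT⟩
      have hT' : ∀ i : Fin (N' + 1), ¬ i = k → x i ∈ auxT n m (i : ℕ) (x k) := by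
        intro i hik
        obtain ⟨j, hj⟩ := Fin.exists_succAbove_eq hik
        have := hT j
        rw [hj] at this
        exact this
      have hbound : ∀ i : Fin (N' + 1), ¬ i = k → x i ∈ Icc (0:ℝ) 1 := by
        intro i hi
        have hTi := hT' i hi
        simp only [auxT] at hTi
        split_ifs at hTi
        · exact ⟨hTi.1, hTi.2.trans hk0.2⟩
        · exact ⟨hTi.1, hTi.2.le.trans hk0.2⟩
        · exact ⟨hk0.1.trans hTi.1.le, hTi.2⟩
        · exact hTi
      refine ⟨fun i => ?_, fun i hi => ?_, fun i hi1 hi2 => ?_, ?_⟩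
      · by_cases hik : i = k
        · rw [hik]; exact hk0
        · exact hbound i hik
      · by_cases hik : i = k
        · rw [hik]
        · have hTi := hT' i hik
          simp only [auxT, if_pos hi] at hTi
          exact hTi.2
      · have hik : ¬ i = k := by
          intro h
          have hv : (i : ℕ) = n - 1 := congrArg Fin.val h
          omega
        have hTi := hT' i hik
        simp only [auxT, if_neg (show ¬ (i:ℕ) + 1 ≤ n by omega), if_pos hi2] at hTi
        exact hTi.2
      · have hlk : ¬ l = k := by
          intro h
          have hv : m - 1 = n - 1 := congrArg Fin.val h
          omega
        have hTi := hT' l hlk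
        simp only [auxT, if_neg (show ¬ (l:ℕ) + 1 ≤ n by show ¬ m - 1 + 1 ≤ n; omega),
          if_neg (show ¬ (l:ℕ) + 1 < m by show ¬ m - 1 + 1 < m; omega),
          if_pos (show (l:ℕ) + 1 = m by show m - 1 + 1 = m; omega)] at hTi
        exact hTi.1
  rw [hSeq, he.measure_preimage hS'.nullMeasurableSet]
  -- Fubini
  rw [Measure.volume_eq_prod, Measure.prod_apply hS']
  have hslice : ∀ t : ℝ, (volume : Measure (Fin N' → ℝ)) (Prod.mk t ⁻¹' S')
      = Set.indicator (Icc (0:ℝ) 1)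
          (fun t => ∏ j : Fin N',
            volume (auxT n m ((k.succAbove j : Fin (N'+1)) : ℕ) t)) t := by
    intro t
    by_cases ht : t ∈ Icc (0:ℝ) 1
    · rw [indicator_of_mem ht]
      have hpre : Prod.mk t ⁻¹' S' = Set.pi univ (fun j : Fin N' =>
          auxT n m ((k.succAbove j : Fin (N'+1)) : ℕ) t) := by
        ext y
        simp only [mem_preimage, hS'def, mem_setOf_eq, Set.mem_univ_pi]
        exact ⟨fun h => h.2, fun h => ⟨ht, h⟩⟩
      rw [hpre, volume_pi_pi]
    · rw [indicator_of_notMem ht]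
      have hpre : Prod.mk t ⁻¹' S' = ∅ :=
        eq_empty_iff_forall_notMem.2 fun y hy => ht hy.1
      rw [hpre, measure_empty]
  rw [lintegral_congr hslice, lintegral_indicator measurableSet_Icc,
    ← Measure.restrict_congr_set Ioo_ae_eq_Icc]
  -- compute the product for t ∈ (0,1)
  have hprod : ∀ t : ℝ, t ∈ Ioo (0:ℝ) 1 →
      (∏ j : Fin N', volume (auxT n m ((k.succAbove j : Fin (N'+1)) : ℕ) t))
        = ENNReal.ofReal (t ^ (m - 2) * (1 - t)) := by
    intro t ht
    have htI : t ∈ Icc (0:ℝ) 1 := ⟨ht.1.le, ht.2.le⟩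
    set H : ℕ → ℝ≥0∞ := fun j =>
      if j + 1 < m then ENNReal.ofReal t else if j + 1 = m then ENNReal.ofReal (1 - t) else 1
      with hH
    have hvol : ∀ i : Fin (N' + 1), volume (auxT n m (i : ℕ) t) = H (i : ℕ) := fun i =>
      auxT_vol n m hnm _ htI
    have hall : ∏ i : Fin (N' + 1), H (i : ℕ)
        = ENNReal.ofReal t ^ (m - 1) * ENNReal.ofReal (1 - t) := by
      rw [Fin.prod_univ_eq_prod_range H (N' + 1)]
      rw [show ∏ j ∈ Finset.range (N' + 1), H j = ∏ j ∈ Finset.range m, H j from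
        (Finset.prod_subset (Finset.range_subset_range.2 (by omega)) fun j hj hj' => by
          simp only [Finset.mem_range] at hj hj'
          simp only [hH, if_neg (show ¬ j + 1 < m by omega),
            if_neg (show ¬ j + 1 = m by omega)]).symm]
      rw [show Finset.range m = Finset.range ((m - 1) + 1) by congr 1; omega,
        Finset.prod_range_succ]
      have hHm : H (m - 1) = ENNReal.ofReal (1 - t) := by
        simp only [hH, if_neg (show ¬ m - 1 + 1 < m by omega),
          if_pos (show m - 1 + 1 = m by omega)]
      have hmid : ∏ j ∈ Finset.range (m - 1), H j
          = ENNReal.ofReal t ^ (m - 1) := by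
        calc ∏ j ∈ Finset.range (m - 1), H j
            = ∏ _j ∈ Finset.range (m - 1), ENNReal.ofReal t :=
              Finset.prod_congr rfl fun j hj => by
                simp only [Finset.mem_range] at hj
                simp only [hH, if_pos (show j + 1 < m by omega)]
          _ = ENNReal.ofReal t ^ (m - 1) := by
              rw [Finset.prod_const, Finset.card_range]
      rw [hHm, hmid]
    have hsplit := Fin.prod_univ_succAbove (fun i : Fin (N' + 1) => H (i : ℕ)) k
    rw [hall] at hsplit
    have hkH : H ((k : Fin (N'+1)) : ℕ) = ENNReal.ofReal t := by
      simp only [hH]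
      rw [if_pos (show ((k : Fin (N'+1)) : ℕ) + 1 < m by show n - 1 + 1 < m; omega)]
    rw [hkH] at hsplit
    have ht0 : ENNReal.ofReal t ≠ 0 := (ENNReal.ofReal_pos.2 ht.1).ne'
    have httop : ENNReal.ofReal t ≠ ⊤ := ENNReal.ofReal_ne_top
    have hcalc : ∏ j : Fin N', volume (auxT n m ((k.succAbove j : Fin (N'+1)) : ℕ) t)
        = ∏ j : Fin N', H ((k.succAbove j : Fin (N'+1)) : ℕ) :=
      Finset.prod_congr rfl fun j _ => hvol _
    rw [hcalc]
    apply (ENNReal.mul_right_inj ht0 httop).mp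
    rw [← hsplit]
    rw [ENNReal.ofReal_mul (pow_nonneg htI.1 _), ENNReal.ofReal_pow htI.1,
      show m - 1 = (m - 2) + 1 by omega, pow_succ]
    ring
  rw [setLIntegral_congr_fun measurableSet_Ioo hprod]
  have hcont : Continuous fun t : ℝ => t ^ (m - 2) * (1 - t) := by fun_prop
  have hint : IntegrableOn (fun t : ℝ => t ^ (m - 2) * (1 - t)) (Ioo (0:ℝ) 1) volume :=
    hcont.integrableOn_Icc.mono_set Ioo_subset_Icc_self
  have hpos : 0 ≤ᶠ[ae (volume.restrict (Ioo (0:ℝ) 1))] fun t : ℝ => t ^ (m - 2) * (1 - t) :=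
    (ae_restrict_iff' measurableSet_Ioo).2 (ae_of_all _ fun t ht =>
      mul_nonneg (pow_nonneg ht.1.le _) (by linarith [ht.2]))
  rw [← ofReal_integral_eq_lintegral_ofReal hint hpos]
  rw [← integral_Ioc_eq_integral_Ioo, ← intervalIntegral.integral_of_le zero_le_one,
    aux_integral (m - 2)]
  have hc1 : ((m - 2 : ℕ) : ℝ) + 1 = (m : ℝ) - 1 := by
    push_cast [Nat.cast_sub hm2]; ring
  have hc2 : ((m - 2 : ℕ) : ℝ) + 2 = (m : ℝ) := by
    push_cast [Nat.cast_sub hm2]; ring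
  rw [hc1, hc2]
  have hm1 : ((m : ℝ≥0∞) - 1) = ((m - 1 : ℕ) : ℝ≥0∞) := by
    rw [ENNReal.natCast_sub, Nat.cast_one]
  rw [hm1]
  have hmr : (2:ℝ) ≤ (m : ℝ) := by exact_mod_cast hm2
  rw [one_div, one_div, ENNReal.ofReal_inv_of_pos (by nlinarith),
    ENNReal.ofReal_mul (by linarith)]
  congr 1
  rw [show ((m : ℝ) - 1) = ((m - 1 : ℕ) : ℝ) by push_cast [Nat.cast_sub (by omega : 1 ≤ m)]; ring,
    ENNReal.ofReal_natCast, ENNReal.ofReal_natCast, mul_comm]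
end

section
/- Let N be an integer with N ≥ 1 and let 1 ≤ n < N be an integer. Then the Lebesgue measure of the set of x ∈ [0,1]^N such that x_n = max{x_1,…,x_n} and there exists k with n < k ≤ N satisfying x_i < x_n for all n < i < k, x_k > x_n, and x_k = max{x_1,…,x_N}, equals (1/N) Σ_{k=n+1}^{N} 1/(k-1). (Dividing by the measure 1/n of the event that x_n is a record gives the no-information player's continuation value c_{1,n} = (n/N) Σ_{k=n+1}^{N} 1/(k-1): the probability that stopping at the next record yields the overall maximum.) -/
open MeasureTheory Set ENNReal

lemma aux_pow_int (c : ℕ) (b : ℝ) (hb : 0 ≤ b) :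
    ∫⁻ a in Ico (0:ℝ) b, ENNReal.ofReal a ^ c = ENNReal.ofReal (b ^ (c+1) / (c+1)) := by
  rw [Measure.restrict_congr_set Ico_ae_eq_Ioc]
  calc ∫⁻ a in Ioc (0:ℝ) b, ENNReal.ofReal a ^ c
      = ∫⁻ a in Ioc (0:ℝ) b, ENNReal.ofReal (a ^ c) := by
        refine setLIntegral_congr_fun measurableSet_Ioc (fun a ha => ?_)
        rw [ENNReal.ofReal_pow ha.1.le]
    _ = ENNReal.ofReal (∫ a in Ioc (0:ℝ) b, a ^ c) := by
        rw [ofReal_integral_eq_lintegral_ofReal]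
        · exact ((continuous_pow c).integrableOn_Icc).mono_set Ioc_subset_Icc_self
        · exact (ae_restrict_iff' measurableSet_Ioc).2
            (ae_of_all _ fun a ha => pow_nonneg ha.1.le c)
    _ = ENNReal.ofReal (b ^ (c+1) / (c+1)) := by
        rw [← intervalIntegral.integral_of_le hb, integral_pow]
        norm_num

lemma aux_two (c q : ℕ) :
    ∫⁻ ab : ℝ × ℝ, Set.indicator {pr : ℝ × ℝ | 0 ≤ pr.1 ∧ pr.1 < pr.2 ∧ 0 < pr.2 ∧ pr.2 ≤ 1}
      (fun pr => ENNReal.ofReal pr.1 ^ c * ENNReal.ofReal pr.2 ^ q) ab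
      = ENNReal.ofReal (1 / ((c+1) * ((c:ℝ)+q+2))) := by
  have hSmeas : MeasurableSet {pr : ℝ × ℝ | 0 ≤ pr.1 ∧ pr.1 < pr.2 ∧ 0 < pr.2 ∧ pr.2 ≤ 1} := by
    apply MeasurableSet.inter
    · exact measurableSet_le measurable_const measurable_fst
    apply MeasurableSet.inter
    · exact measurableSet_lt measurable_fst measurable_snd
    apply MeasurableSet.inter
    · exact measurableSet_lt measurable_const measurable_snd
    · exact measurableSet_le measurable_snd measurable_const
  have hfmeas : Measurable (fun pr : ℝ × ℝ => ENNReal.ofReal pr.1 ^ c * ENNReal.ofReal pr.2 ^ q) :=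
    ((measurable_fst.ennreal_ofReal.pow_const c).mul (measurable_snd.ennreal_ofReal.pow_const q))
  rw [Measure.volume_eq_prod, lintegral_prod_symm _ (hfmeas.indicator hSmeas).aemeasurable]
  have hinner : ∀ b : ℝ, (∫⁻ a, Set.indicator {pr : ℝ × ℝ | 0 ≤ pr.1 ∧ pr.1 < pr.2 ∧ 0 < pr.2 ∧ pr.2 ≤ 1}
      (fun pr => ENNReal.ofReal pr.1 ^ c * ENNReal.ofReal pr.2 ^ q) (a, b))
      = Set.indicator (Ioc (0:ℝ) 1) (fun b => ENNReal.ofReal (b ^ (c+1) / (c+1)) * ENNReal.ofReal b ^ q) b := by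
    intro b
    by_cases hb : b ∈ Ioc (0:ℝ) 1
    · rw [Set.indicator_of_mem hb]
      have h1 : (fun a : ℝ => Set.indicator {pr : ℝ × ℝ | 0 ≤ pr.1 ∧ pr.1 < pr.2 ∧ 0 < pr.2 ∧ pr.2 ≤ 1}
          (fun pr => ENNReal.ofReal pr.1 ^ c * ENNReal.ofReal pr.2 ^ q) (a, b))
          = Set.indicator (Ico (0:ℝ) b) (fun a => ENNReal.ofReal a ^ c * ENNReal.ofReal b ^ q) := by
        funext a
        simp only [Set.indicator_apply, Set.mem_setOf_eq, Set.mem_Ico]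
        refine if_congr ?_ rfl rfl
        constructor
        · rintro ⟨h1, h2, h3, h4⟩; exact ⟨h1, h2⟩
        · rintro ⟨h1, h2⟩; exact ⟨h1, h2, hb.1, hb.2⟩
      rw [h1, lintegral_indicator measurableSet_Ico, lintegral_mul_const _ (ENNReal.measurable_ofReal.pow_const c),
        aux_pow_int c b hb.1.le]
    · rw [Set.indicator_of_notMem hb]
      have h1 : (fun a : ℝ => Set.indicator {pr : ℝ × ℝ | 0 ≤ pr.1 ∧ pr.1 < pr.2 ∧ 0 < pr.2 ∧ pr.2 ≤ 1}
          (fun pr => ENNReal.ofReal pr.1 ^ c * ENNReal.ofReal pr.2 ^ q) (a, b)) = fun _ => 0 := by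
        funext a
        rw [Set.indicator_of_notMem]
        rintro ⟨h1, h2, h3, h4⟩
        exact hb ⟨h3, h4⟩
      rw [h1, lintegral_const, zero_mul]
  simp_rw [hinner]
  rw [lintegral_indicator measurableSet_Ioc]
  calc ∫⁻ b in Ioc (0:ℝ) 1, ENNReal.ofReal (b ^ (c+1) / (c+1)) * ENNReal.ofReal b ^ q
      = ∫⁻ b in Ioc (0:ℝ) 1, ENNReal.ofReal (b ^ (c+1) / (c+1) * b ^ q) := by
        refine setLIntegral_congr_fun measurableSet_Ioc (fun b hbmem => ?_)
        have hb0 : (0:ℝ) < b := hbmem.1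
        rw [ENNReal.ofReal_mul (by positivity), ENNReal.ofReal_pow hbmem.1.le]
    _ = ENNReal.ofReal (∫ b in Ioc (0:ℝ) 1, b ^ (c+1) / (c+1) * b ^ q) := by
        rw [ofReal_integral_eq_lintegral_ofReal]
        · exact ((((continuous_pow (c+1)).div_const _).mul (continuous_pow q)).integrableOn_Icc).mono_set Ioc_subset_Icc_self
        · refine (ae_restrict_iff' measurableSet_Ioc).2 (ae_of_all _ fun b hbmem => ?_)
          have hb0 : (0:ℝ) < b := hbmem.1
          positivity
    _ = ENNReal.ofReal (1 / ((c+1) * ((c:ℝ)+q+2))) := by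
        congr 1
        have : ∀ b : ℝ, b ^ (c+1) / (c+1) * b ^ q = b ^ (c+1+q) / (c+1) := by
          intro b; rw [pow_add]; ring
        simp_rw [this]
        rw [integral_div, ← intervalIntegral.integral_of_le (zero_le_one), integral_pow]
        have h2 : (c:ℝ)+1+q+1 = (c:ℝ)+q+2 := by ring
        push_cast
        rw [h2]
        norm_num
        rw [div_eq_mul_inv]

lemma volA (N : ℕ) (m k : Fin N) (hmk : m ≠ k) (T : Finset (Fin N)) (hm : m ∉ T) (hk : k ∉ T)
    (cl : Fin N → Prop) [DecidablePred cl] :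
    volume {x : Fin N → ℝ | x m ∈ Icc (0:ℝ) 1 ∧ x k ∈ Icc (0:ℝ) 1 ∧ x m < x k ∧
      ∀ j, j ≠ m → j ≠ k → x j ∈
        (if j ∈ T then (if cl j then Icc 0 (x m) else Ico 0 (x m)) else Icc 0 (x k))}
      = (((T.card + 1) * N : ℕ) : ℝ≥0∞)⁻¹ := by
  classical
  set p : Fin N → Prop := fun i => i = m ∨ i = k with hp
  set A : Set (Fin N → ℝ) := {x : Fin N → ℝ | x m ∈ Icc (0:ℝ) 1 ∧ x k ∈ Icc (0:ℝ) 1 ∧ x m < x k ∧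
      ∀ j, j ≠ m → j ≠ k → x j ∈
        (if j ∈ T then (if cl j then Icc 0 (x m) else Ico 0 (x m)) else Icc 0 (x k))} with hA
  have hAmeas : MeasurableSet A := by
    apply MeasurableSet.inter
    · exact (measurable_pi_apply m) measurableSet_Icc
    apply MeasurableSet.inter
    · exact (measurable_pi_apply k) measurableSet_Icc
    apply MeasurableSet.inter
    · exact measurableSet_lt (measurable_pi_apply m) (measurable_pi_apply k)
    · have : {x : Fin N → ℝ | ∀ j, j ≠ m → j ≠ k → x j ∈
          (if j ∈ T then (if cl j then Icc 0 (x m) else Ico 0 (x m)) else Icc 0 (x k))}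
          = ⋂ (j : Fin N), ⋂ (_ : j ≠ m), ⋂ (_ : j ≠ k), {x : Fin N → ℝ | x j ∈
            (if j ∈ T then (if cl j then Icc 0 (x m) else Ico 0 (x m)) else Icc 0 (x k))} := by
        ext x; simp [Set.mem_iInter]
      show MeasurableSet {x : Fin N → ℝ | ∀ j, j ≠ m → j ≠ k → x j ∈
          (if j ∈ T then (if cl j then Icc 0 (x m) else Ico 0 (x m)) else Icc 0 (x k))}
      rw [this]
      refine MeasurableSet.iInter fun j => MeasurableSet.iInter fun _ =>
        MeasurableSet.iInter fun _ => ?_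
      split_ifs with h1 h2
      · exact MeasurableSet.inter (measurableSet_le measurable_const (measurable_pi_apply j))
          (measurableSet_le (measurable_pi_apply j) (measurable_pi_apply m))
      · exact MeasurableSet.inter (measurableSet_le measurable_const (measurable_pi_apply j))
          (measurableSet_lt (measurable_pi_apply j) (measurable_pi_apply m))
      · exact MeasurableSet.inter (measurableSet_le measurable_const (measurable_pi_apply j))
          (measurableSet_le (measurable_pi_apply j) (measurable_pi_apply k))
  -- the two-point equivalence
  have hpm : p m := Or.inl rfl
  have hpk : p k := Or.inr rfl
  let e0 : Fin 2 ≃ {i : Fin N // p i} :=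
  { toFun := fun j => if j = 0 then ⟨m, hpm⟩ else ⟨k, hpk⟩
    invFun := fun i => if i.1 = m then 0 else 1
    left_inv := by
      intro j
      fin_cases j
      · simp
      · simp [(Ne.symm hmk)]
    right_inv := by
      rintro ⟨i, hi | hi⟩
      · subst hi; simp
      · subst hi; simp [(Ne.symm hmk)] }
  let e : ((ℝ × ℝ) × ({i : Fin N // ¬ p i} → ℝ)) ≃ᵐ (Fin N → ℝ) :=
    ((MeasurableEquiv.finTwoArrow.symm.trans
        (MeasurableEquiv.arrowCongr' e0 (MeasurableEquiv.refl ℝ))).prodCongr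
      (MeasurableEquiv.refl _)).trans
      (MeasurableEquiv.piEquivPiSubtypeProd (fun _ : Fin N => ℝ) p).symm
  have hep : MeasurePreserving e volume volume := by
    refine MeasurePreserving.trans ?_
      ((volume_preserving_piEquivPiSubtypeProd (fun _ : Fin N => ℝ) p).symm _)
    exact MeasurePreserving.prod
      (((volume_preserving_finTwoArrow ℝ).symm _).trans
        (volume_preserving_arrowCongr' e0 (MeasurableEquiv.refl ℝ) (MeasurePreserving.id _)))
      (MeasurePreserving.id _)
  have he : ∀ (a b : ℝ) (z : {i : Fin N // ¬ p i} → ℝ) (i : Fin N),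
      e ((a, b), z) i = if h : p i then (if i = m then a else b) else z ⟨i, h⟩ := by
    intro a b z i
    simp only [e, e0, MeasurableEquiv.trans_apply, MeasurableEquiv.prodCongr,
      MeasurableEquiv.coe_mk, Equiv.prodCongr_apply, Equiv.coe_trans,
      MeasurableEquiv.refl_apply, MeasurableEquiv.symm_apply_apply,
      MeasurableEquiv.piEquivPiSubtypeProd, MeasurableEquiv.arrowCongr',
      Equiv.arrowCongr', Equiv.arrowCongr, MeasurableEquiv.finTwoArrow,
      finTwoArrowEquiv, piFinTwoEquiv, MeasurableEquiv.symm_mk, Equiv.piEquivPiSubtypeProd_symm_apply]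
    by_cases h : p i
    · rw [dif_pos h, dif_pos h]
      by_cases him : i = m
      · simp [Prod.map, him, MeasurableEquiv.piFinTwo, piFinTwoEquiv]
      · simp [Prod.map, him, MeasurableEquiv.piFinTwo, piFinTwoEquiv]
    · rw [dif_neg h, dif_neg h]
      simp [Prod.map]
  have hxm : ∀ (a b : ℝ) z, e ((a,b),z) m = a := fun a b z => by
    rw [he, dif_pos hpm, if_pos rfl]
  have hxk : ∀ (a b : ℝ) z, e ((a,b),z) k = b := fun a b z => by
    rw [he, dif_pos hpk, if_neg (fun hh => hmk hh.symm)]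
  have hxj : ∀ (a b : ℝ) z (j : Fin N) (hj : ¬ p j), e ((a,b),z) j = z ⟨j, hj⟩ :=
    fun a b z j hj => by rw [he, dif_neg hj]
  have h2N : 2 ≤ N := by
    have h1 := m.isLt; have h2 := k.isLt
    have h3 : (m : ℕ) ≠ (k : ℕ) := fun h => hmk (Fin.ext h)
    omega
  have hpre : e ⁻¹' A = {pr : (ℝ × ℝ) × ({i : Fin N // ¬ p i} → ℝ) |
      (0 ≤ pr.1.1 ∧ pr.1.1 < pr.1.2 ∧ 0 < pr.1.2 ∧ pr.1.2 ≤ 1) ∧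
      ∀ j : {i : Fin N // ¬ p i}, pr.2 j ∈
        (if (j : Fin N) ∈ T then (if cl j then Icc 0 pr.1.1 else Ico 0 pr.1.1)
          else Icc 0 pr.1.2)} := by
    ext ⟨⟨a, b⟩, z⟩
    simp only [mem_preimage, hA, mem_setOf_eq, hxm, hxk, mem_Icc]
    constructor
    · rintro ⟨h1, h2, h3, h4⟩
      refine ⟨⟨h1.1, h3, lt_of_le_of_lt h1.1 h3, h2.2⟩, fun j => ?_⟩
      have hj1 : (j : Fin N) ≠ m := fun hh => j.2 (Or.inl hh)
      have hj2 : (j : Fin N) ≠ k := fun hh => j.2 (Or.inr hh)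
      have h5 := h4 j hj1 hj2
      rwa [hxj a b z j j.2] at h5
    · rintro ⟨⟨h1, h2, h3, h4⟩, h5⟩
      refine ⟨⟨h1, le_of_lt (lt_of_lt_of_le h2 h4)⟩, ⟨h3.le, h4⟩, h2, fun j hj1 hj2 => ?_⟩
      have hj : ¬ p j := fun hh => hh.elim hj1 hj2
      rw [hxj a b z j hj]
      exact h5 ⟨j, hj⟩
  have hcard2 : Fintype.card {i : Fin N // p i} = 2 := by
    rw [Fintype.card_subtype]
    have h1 : Finset.univ.filter p = {m, k} := by
      ext i
      simp [hp, Finset.mem_insert, Finset.mem_singleton]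
    rw [h1, Finset.card_insert_of_notMem (by simp [hmk]), Finset.card_singleton]
  have hcardc : Fintype.card {i : Fin N // ¬ p i} = N - 2 := by
    rw [Fintype.card_subtype_compl, hcard2, Fintype.card_fin]
  have hfilter : (Finset.univ.filter (fun j : {i : Fin N // ¬ p i} => (j : Fin N) ∈ T)).card
      = T.card := by
    refine Finset.card_bij (fun j _ => (j : Fin N)) ?_ ?_ ?_
    · intro a ha; exact (Finset.mem_filter.1 ha).2
    · intro a _ b _ h; exact Subtype.ext h
    · intro t ht
      refine ⟨⟨t, fun hp' => ?_⟩, Finset.mem_filter.2 ⟨Finset.mem_univ _, ht⟩, rfl⟩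
      rcases hp' with h | h
      · exact hm (h ▸ ht)
      · exact hk (h ▸ ht)
  have hTle : T.card ≤ N - 2 := by
    rw [← hfilter, ← hcardc]
    exact (Finset.card_filter_le _ _).trans (le_of_eq (Finset.card_univ))
  have hfilterneg : (Finset.univ.filter (fun j : {i : Fin N // ¬ p i} => ¬ (j : Fin N) ∈ T)).card
      = N - 2 - T.card := by
    have := Finset.card_filter_add_card_filter_not
      (s := (Finset.univ : Finset {i : Fin N // ¬ p i}))
      (p := fun j => (j : Fin N) ∈ T)
    rw [hfilter, Finset.card_univ, hcardc] at this
    omega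
  calc volume A = volume (e ⁻¹' A) := (hep.measure_preimage hAmeas.nullMeasurableSet).symm
    _ = ∫⁻ ab : ℝ × ℝ, volume (Prod.mk ab ⁻¹' (e ⁻¹' A)) := by
        rw [Measure.volume_eq_prod, Measure.prod_apply (e.measurable hAmeas)]
    _ = ∫⁻ ab : ℝ × ℝ, Set.indicator {pr : ℝ × ℝ | 0 ≤ pr.1 ∧ pr.1 < pr.2 ∧ 0 < pr.2 ∧ pr.2 ≤ 1}
          (fun pr => ENNReal.ofReal pr.1 ^ T.card * ENNReal.ofReal pr.2 ^ (N - 2 - T.card)) ab := by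
        refine lintegral_congr fun ab => ?_
        obtain ⟨a, b⟩ := ab
        rw [hpre]
        by_cases hab : (0 ≤ a ∧ a < b ∧ 0 < b ∧ b ≤ 1)
        · have hslice : (Prod.mk (a, b) ⁻¹' {pr : (ℝ × ℝ) × ({i : Fin N // ¬ p i} → ℝ) |
              (0 ≤ pr.1.1 ∧ pr.1.1 < pr.1.2 ∧ 0 < pr.1.2 ∧ pr.1.2 ≤ 1) ∧
              ∀ j : {i : Fin N // ¬ p i}, pr.2 j ∈
                (if (j : Fin N) ∈ T then (if cl j then Icc 0 pr.1.1 else Ico 0 pr.1.1)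
                  else Icc 0 pr.1.2)})
              = Set.pi Set.univ (fun j : {i : Fin N // ¬ p i} =>
                (if (j : Fin N) ∈ T then (if cl j then Icc 0 a else Ico 0 a) else Icc 0 b)) := by
            ext z
            simp only [mem_preimage, mem_setOf_eq, Set.mem_univ_pi]
            exact ⟨fun h => h.2, fun h => ⟨hab, h⟩⟩
          rw [hslice, volume_pi_pi, Set.indicator_of_mem (by exact hab)]
          have hvol : ∀ j : {i : Fin N // ¬ p i},
              volume (if (j : Fin N) ∈ T then (if cl j then Icc 0 a else Ico 0 a) else Icc 0 b)
              = (if (j : Fin N) ∈ T then ENNReal.ofReal a else ENNReal.ofReal b) := by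
            intro j
            split_ifs with h1 h2 <;>
              simp [Real.volume_Icc, Real.volume_Ico]
          calc (∏ j : {i : Fin N // ¬ p i},
                volume (if (j : Fin N) ∈ T then (if cl j then Icc 0 a else Ico 0 a) else Icc 0 b))
              = ∏ j : {i : Fin N // ¬ p i},
                (if (j : Fin N) ∈ T then ENNReal.ofReal a else ENNReal.ofReal b) :=
                Finset.prod_congr rfl fun j _ => hvol j
            _ = ENNReal.ofReal a ^ T.card * ENNReal.ofReal b ^ (N - 2 - T.card) := by
                rw [Finset.prod_ite (fun _ => ENNReal.ofReal a) (fun _ => ENNReal.ofReal b),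
                  Finset.prod_const, Finset.prod_const, hfilter, hfilterneg]
        · have hslice : (Prod.mk (a, b) ⁻¹' {pr : (ℝ × ℝ) × ({i : Fin N // ¬ p i} → ℝ) |
              (0 ≤ pr.1.1 ∧ pr.1.1 < pr.1.2 ∧ 0 < pr.1.2 ∧ pr.1.2 ≤ 1) ∧
              ∀ j : {i : Fin N // ¬ p i}, pr.2 j ∈
                (if (j : Fin N) ∈ T then (if cl j then Icc 0 pr.1.1 else Ico 0 pr.1.1)
                  else Icc 0 pr.1.2)}) = ∅ := by
            ext z
            simp only [mem_preimage, mem_setOf_eq, Set.mem_empty_iff_false, iff_false]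
            exact fun h => hab h.1
          rw [hslice, measure_empty, Set.indicator_of_notMem (by exact hab)]
    _ = ENNReal.ofReal (1 / ((T.card + 1) * ((T.card : ℝ) + (N - 2 - T.card : ℕ) + 2))) :=
        aux_two T.card (N - 2 - T.card)
    _ = (((T.card + 1) * N : ℕ) : ℝ≥0∞)⁻¹ := by
        have hN : N = T.card + (N - 2 - T.card) + 2 := by omega
        have hNr : (T.card : ℝ) + ((N - 2 - T.card : ℕ) : ℝ) + 2 = (N : ℝ) := by
          exact_mod_cast congrArg (fun t : ℕ => (t : ℝ)) hN.symm
        have hcq : ((T.card : ℝ) + 1) * ((T.card : ℝ) + ((N - 2 - T.card : ℕ) : ℝ) + 2)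
            = (((T.card + 1) * N : ℕ) : ℝ) := by
          rw [hNr]
          push_cast
          ring
        have hpos : (0:ℝ) < (((T.card + 1) * N : ℕ) : ℝ) := by
          have hN0 : 0 < N := by omega
          exact Nat.cast_pos.2 (Nat.mul_pos (Nat.succ_pos _) hN0)
        rw [one_div, hcq, ENNReal.ofReal_inv_of_pos hpos, ENNReal.ofReal_natCast]

/-- For `1 ≤ n < N`, the measure of the set of `x ∈ [0,1]^N` for which `x_n` is a record
and the next observation exceeding `x_n` (at some time `k` with `n < k ≤ N`) is the overall
maximum equals `(1/N) Σ_{k=n+1}^{N} 1/(k-1)`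
(indices are 1-based; coordinate `i : Fin N` carries index `i+1`). -/
theorem stmt_2 (N n : ℕ) (hn : 1 ≤ n) (hnN : n < N) :
    volume {x : Fin N → ℝ |
        (∀ i, x i ∈ Icc (0:ℝ) 1) ∧
        (∀ i : Fin N, (i : ℕ) + 1 ≤ n → x i ≤ x ⟨n - 1, by omega⟩) ∧
        ∃ k : Fin N, n < (k : ℕ) + 1 ∧
          (∀ i : Fin N, n < (i : ℕ) + 1 → (i : ℕ) + 1 < (k : ℕ) + 1 →
            x i < x ⟨n - 1, by omega⟩) ∧
          x ⟨n - 1, by omega⟩ < x k ∧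
          (∀ j : Fin N, x j ≤ x k)} =
      (1 / (N : ℝ≥0∞)) * ∑ k ∈ Finset.Icc (n + 1) N, 1 / ((k : ℝ≥0∞) - 1) := by
  classical
  have hmlt : n - 1 < N := by omega
  set m : Fin N := ⟨n - 1, hmlt⟩ with hmdef
  set E : Fin N → Set (Fin N → ℝ) := fun k =>
    {x : Fin N → ℝ | (∀ i, x i ∈ Icc (0:ℝ) 1) ∧
      (∀ i : Fin N, (i : ℕ) + 1 ≤ n → x i ≤ x m) ∧
      (n < (k : ℕ) + 1 ∧
        (∀ i : Fin N, n < (i : ℕ) + 1 → (i : ℕ) + 1 < (k : ℕ) + 1 → x i < x m) ∧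
        x m < x k ∧ (∀ j : Fin N, x j ≤ x k))} with hE
  have hSU : {x : Fin N → ℝ |
        (∀ i, x i ∈ Icc (0:ℝ) 1) ∧
        (∀ i : Fin N, (i : ℕ) + 1 ≤ n → x i ≤ x ⟨n - 1, by omega⟩) ∧
        ∃ k : Fin N, n < (k : ℕ) + 1 ∧
          (∀ i : Fin N, n < (i : ℕ) + 1 → (i : ℕ) + 1 < (k : ℕ) + 1 →
            x i < x ⟨n - 1, by omega⟩) ∧
          x ⟨n - 1, by omega⟩ < x k ∧
          (∀ j : Fin N, x j ≤ x k)} = ⋃ k, E k := by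
    ext x
    simp only [hE, mem_setOf_eq, mem_iUnion]
    constructor
    · rintro ⟨h1, h2, k, h3⟩; exact ⟨k, h1, h2, h3⟩
    · rintro ⟨k, h1, h2, h3⟩; exact ⟨h1, h2, k, h3⟩
  have hEmeas : ∀ k, MeasurableSet (E k) := by
    intro k
    have hrw : E k = (⋂ i, {x : Fin N → ℝ | x i ∈ Icc (0:ℝ) 1}) ∩
        ((⋂ (i : Fin N), ⋂ (_ : (i : ℕ) + 1 ≤ n), {x : Fin N → ℝ | x i ≤ x m}) ∩
        ({x : Fin N → ℝ | n < (k : ℕ) + 1} ∩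
        ((⋂ (i : Fin N), ⋂ (_ : n < (i : ℕ) + 1), ⋂ (_ : (i : ℕ) + 1 < (k : ℕ) + 1),
            {x : Fin N → ℝ | x i < x m}) ∩
        ({x : Fin N → ℝ | x m < x k} ∩ (⋂ j, {x : Fin N → ℝ | x j ≤ x k}))))) := by
      ext x
      simp only [hE, mem_setOf_eq, mem_inter_iff, mem_iInter]
    rw [hrw]
    refine (MeasurableSet.iInter fun i => (measurable_pi_apply i) measurableSet_Icc).inter
      (MeasurableSet.inter ?_ (MeasurableSet.inter ?_ (MeasurableSet.inter ?_
        (MeasurableSet.inter ?_ ?_))))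
    · exact MeasurableSet.iInter fun i => MeasurableSet.iInter fun _ =>
        measurableSet_le (measurable_pi_apply i) (measurable_pi_apply m)
    · exact MeasurableSet.const _
    · exact MeasurableSet.iInter fun i => MeasurableSet.iInter fun _ =>
        MeasurableSet.iInter fun _ =>
          measurableSet_lt (measurable_pi_apply i) (measurable_pi_apply m)
    · exact measurableSet_lt (measurable_pi_apply m) (measurable_pi_apply k)
    · exact MeasurableSet.iInter fun j =>
        measurableSet_le (measurable_pi_apply j) (measurable_pi_apply k)
  have hdis : Pairwise (Function.onFun Disjoint E) := by
    have key : ∀ k k' : Fin N, k < k' → Disjoint (E k) (E k') := by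
      intro k k' hlt
      rw [Set.disjoint_left]
      rintro x ⟨h1, h2, h3, h4, h5, h6⟩ ⟨h1', h2', h3', h4', h5', h6'⟩
      have hkk : (k : ℕ) < (k' : ℕ) := hlt
      have h7 := h4' k h3 (by omega)
      exact absurd h5 (not_lt.2 h7.le)
    intro k k' hne
    rcases lt_or_gt_of_ne hne with h | h
    · exact key _ _ h
    · exact (key _ _ h).symm
  rw [hSU, measure_iUnion hdis hEmeas, tsum_fintype]
  have hvol : ∀ k : Fin N, volume (E k)
      = if n ≤ (k : ℕ) then ((((k : ℕ)) * N : ℕ) : ℝ≥0∞)⁻¹ else 0 := by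
    intro k
    by_cases hk : n ≤ (k : ℕ)
    · rw [if_pos hk]
      have hmk : m ≠ k := by
        refine Fin.ne_of_val_ne ?_
        show n - 1 ≠ (k : ℕ)
        omega
      set T : Finset (Fin N) := Finset.univ.filter
        (fun j : Fin N => ((j : ℕ) < (k : ℕ) ∧ j ≠ m)) with hT
      have hmT : m ∉ T := by simp [hT]
      have hkT : k ∉ T := by simp [hT]
      have hset : E k = {x : Fin N → ℝ | x m ∈ Icc (0:ℝ) 1 ∧ x k ∈ Icc (0:ℝ) 1 ∧ x m < x k ∧
          ∀ j, j ≠ m → j ≠ k → x j ∈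
            (if j ∈ T then (if (fun j : Fin N => (j : ℕ) < n) j then Icc 0 (x m) else Ico 0 (x m))
              else Icc 0 (x k))} := by
        ext x
        simp only [hE, hT, mem_setOf_eq, Finset.mem_filter, Finset.mem_univ, true_and]
        constructor
        · rintro ⟨h1, h2, h3, h4, h5, h6⟩
          refine ⟨h1 m, h1 k, h5, fun j hjm hjk => ?_⟩
          by_cases hjT : (j : ℕ) < (k : ℕ) ∧ j ≠ m
          · rw [if_pos hjT]
            by_cases hjn : (j : ℕ) < n
            · rw [if_pos hjn]
              exact ⟨(h1 j).1, h2 j (by omega)⟩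
            · rw [if_neg hjn]
              exact ⟨(h1 j).1, h4 j (by omega) (by omega)⟩
          · rw [if_neg hjT]
            exact ⟨(h1 j).1, h6 j⟩
        · rintro ⟨h1, h2, h3, h4⟩
          have hxj : ∀ j : Fin N, x j ≤ x k := by
            intro j
            by_cases hjm : j = m
            · subst hjm; exact h3.le
            by_cases hjk : j = k
            · subst hjk; exact le_refl _
            have := h4 j hjm hjk
            by_cases hjT : (j : ℕ) < (k : ℕ) ∧ j ≠ m
            · rw [if_pos hjT] at this
              by_cases hjn : (j : ℕ) < n
              · rw [if_pos hjn] at this; exact this.2.trans h3.le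
              · rw [if_neg hjn] at this; exact (this.2.trans h3).le
            · rw [if_neg hjT] at this; exact this.2
          refine ⟨fun i => ?_, fun i hi => ?_, by omega, fun i hi1 hi2 => ?_, h3, hxj⟩
          · by_cases him : i = m
            · subst him; exact h1
            by_cases hik : i = k
            · subst hik; exact h2
            have := h4 i him hik
            constructor
            · split_ifs at this with hh1 hh2
              · exact this.1
              · exact this.1
              · exact this.1
            · exact (hxj i).trans h2.2
          · by_cases him : i = m
            · subst him; exact le_refl _
            have hik : i ≠ k := by
              refine Fin.ne_of_val_ne ?_
              omega
            have := h4 i him hik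
            have hiT : (i : ℕ) < (k : ℕ) ∧ i ≠ m := ⟨by omega, him⟩
            rw [if_pos hiT, if_pos (show (i : ℕ) < n by omega)] at this
            exact this.2
          · have him : i ≠ m := by
              refine Fin.ne_of_val_ne ?_
              show (i : ℕ) ≠ n - 1
              omega
            have hik : i ≠ k := by
              refine Fin.ne_of_val_ne ?_
              omega
            have := h4 i him hik
            have hiT : (i : ℕ) < (k : ℕ) ∧ i ≠ m := ⟨by omega, him⟩
            rw [if_pos hiT, if_neg (show ¬ (i : ℕ) < n by omega)] at this
            exact this.2
      rw [hset, volA N m k hmk T hmT hkT (fun j : Fin N => (j : ℕ) < n)]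
      have hc1 : (Finset.univ.filter (fun j : Fin N => (j : ℕ) < (k : ℕ))).card = (k : ℕ) := by
        conv_rhs => rw [← Finset.card_range (k : ℕ)]
        refine Finset.card_bij (fun j _ => (j : ℕ)) ?_ ?_ ?_
        · intro a ha
          simp only [Finset.mem_filter, Finset.mem_univ, true_and] at ha
          exact Finset.mem_range.2 ha
        · intro a _ b _ h; exact Fin.ext h
        · intro t ht
          have htk : t < (k : ℕ) := Finset.mem_range.1 ht
          refine ⟨⟨t, by omega⟩, ?_, rfl⟩
          simp only [Finset.mem_filter, Finset.mem_univ, true_and]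
          exact htk
      have hTeq : T = (Finset.univ.filter (fun j : Fin N => (j : ℕ) < (k : ℕ))).erase m := by
        ext j
        simp only [hT, Finset.mem_filter, Finset.mem_univ, true_and, Finset.mem_erase]
        tauto
      have hcard : T.card = (k : ℕ) - 1 := by
        rw [hTeq, Finset.card_erase_of_mem ?_, hc1]
        simp only [Finset.mem_filter, Finset.mem_univ, true_and]
        show n - 1 < (k : ℕ)
        omega
      rw [hcard]
      have hk1 : (k : ℕ) - 1 + 1 = (k : ℕ) := by omega
      rw [hk1]
    · rw [if_neg hk]
      have : E k = ∅ := by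
        ext x
        simp only [hE, mem_setOf_eq, Set.mem_empty_iff_false, iff_false]
        rintro ⟨-, -, h3, -⟩
        omega
      rw [this, measure_empty]
  simp_rw [hvol]
  rw [Finset.sum_ite, Finset.sum_const_zero, add_zero]
  rw [Finset.mul_sum]
  refine Finset.sum_nbij' (fun k : Fin N => (k : ℕ) + 1)
    (fun t => if ht : t - 1 < N then (⟨t - 1, ht⟩ : Fin N) else ⟨0, by omega⟩) ?_ ?_ ?_ ?_ ?_
  · intro a ha
    simp only [Finset.mem_filter, Finset.mem_univ, true_and] at ha
    have := a.isLt
    simp only [Finset.mem_Icc]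
    omega
  · intro a ha
    simp only [Finset.mem_Icc] at ha
    have ht : a - 1 < N := by omega
    simp only [dif_pos ht]
    simp only [Finset.mem_filter, Finset.mem_univ, true_and]
    show n ≤ a - 1
    omega
  · intro a ha
    simp only [Finset.mem_filter, Finset.mem_univ, true_and] at ha
    have := a.isLt
    have ht : (a : ℕ) + 1 - 1 < N := by omega
    simp only [dif_pos ht]
    exact Fin.ext (by simp)
  · intro a ha
    simp only [Finset.mem_Icc] at ha
    have ht : a - 1 < N := by omega
    simp only [dif_pos ht]
    show a - 1 + 1 = a
    omega
  · intro a ha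
    simp only [Finset.mem_filter, Finset.mem_univ, true_and] at ha
    have h1 : ((((a : ℕ) + 1 : ℕ)) : ℝ≥0∞) - 1 = (((a : ℕ) : ℕ) : ℝ≥0∞) := by
      push_cast
      rw [ENNReal.add_sub_cancel_right ENNReal.one_ne_top]
    have h2 : (((a : ℕ) * N : ℕ) : ℝ≥0∞) = (((a : ℕ) : ℕ) : ℝ≥0∞) * ((N : ℕ) : ℝ≥0∞) := by
      push_cast
      ring
    show ((((a : ℕ) * N : ℕ)) : ℝ≥0∞)⁻¹ = 1 / (N : ℝ≥0∞) * (1 / ((((a : ℕ) + 1 : ℕ) : ℝ≥0∞) - 1))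
    rw [h1, h2, ENNReal.mul_inv (Or.inr (ENNReal.natCast_ne_top N))
      (Or.inl (ENNReal.natCast_ne_top _)), one_div, one_div]
    ring
end

section
/- Let M be an integer with M ≥ 1 and let x ∈ [0,1]. Then the Lebesgue measure of the set of y ∈ [0,1]^M such that there exists k with 1 ≤ k ≤ M satisfying y_i ≤ x for all 1 ≤ i < k, y_k > x, and y_j ≤ y_k for all 1 ≤ j ≤ M, equals Σ_{k=1}^{M} x^{k-1}(1 - x^{M-k+1})/(M-k+1). (With M = N-n this is the full-information player's continuation value c_{2,n}(x): the probability that the first future observation exceeding the current maximum x is itself the overall maximum of the remaining observations.) -/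
open MeasureTheory Set

lemma aux_card_filter_lt (n k : ℕ) (hk : k ≤ n) :
    (Finset.univ.filter (fun j : Fin n => (j:ℕ) < k)).card = k := by
  have : (Finset.univ.filter fun j : Fin n => (j:ℕ) < k)
      = (Finset.range k).attachFin (fun m hm => lt_of_lt_of_le (Finset.mem_range.1 hm) hk) := by
    ext j; simp [Finset.mem_attachFin]
  rw [this, Finset.card_attachFin, Finset.card_range]

lemma aux_succAbove_lt (n : ℕ) (k : Fin (n+1)) (j : Fin n) :
    ((k.succAbove j : Fin (n+1)) : ℕ) < (k:ℕ) ↔ (j:ℕ) < (k:ℕ) := by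
  rcases lt_or_ge (Fin.castSucc j) k with h | h
  · rw [Fin.succAbove_of_castSucc_lt _ _ h]
    simpa using Fin.lt_iff_val_lt_val.1 h
  · rw [Fin.succAbove_of_le_castSucc _ _ h]
    have := Fin.le_iff_val_le_val.1 h
    simp at this ⊢
    omega

/-- For `M ≥ 1` and `x ∈ [0,1]`, the measure of the set of `y ∈ [0,1]^M` such that the first
coordinate exceeding `x` (at some 1-based time `k`, i.e. zero-based `k : Fin M`) is the overall
maximum of `y` equals `Σ_{k=1}^{M} x^{k-1}(1 - x^{M-k+1})/(M-k+1)`. -/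
theorem stmt_3 (M : ℕ) (hM : 1 ≤ M) (x : ℝ) (hx : x ∈ Icc (0:ℝ) 1) :
    volume {y : Fin M → ℝ |
        (∀ i, y i ∈ Icc (0:ℝ) 1) ∧
        ∃ k : Fin M,
          (∀ i : Fin M, (i : ℕ) < (k : ℕ) → y i ≤ x) ∧
          x < y k ∧
          (∀ j : Fin M, y j ≤ y k)} =
      ENNReal.ofReal
        (∑ k ∈ Finset.Icc 1 M,
          x ^ (k - 1) * (1 - x ^ (M - k + 1)) / ((M - k + 1 : ℕ) : ℝ)) := by
  obtain ⟨n, rfl⟩ : ∃ n, M = n + 1 := ⟨M - 1, (Nat.succ_pred_eq_of_pos hM).symm⟩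
  obtain ⟨hx0, hx1⟩ := hx
  -- the pieces indexed by the first coordinate exceeding `x`
  set A : Fin (n+1) → Set (Fin (n+1) → ℝ) := fun k =>
    {y | (∀ i, y i ∈ Icc (0:ℝ) 1) ∧ (∀ i : Fin (n+1), (i:ℕ) < (k:ℕ) → y i ≤ x) ∧
      x < y k ∧ ∀ j, y j ≤ y k} with hA
  have hset : {y : Fin (n+1) → ℝ |
        (∀ i, y i ∈ Icc (0:ℝ) 1) ∧
        ∃ k : Fin (n+1),
          (∀ i : Fin (n+1), (i : ℕ) < (k : ℕ) → y i ≤ x) ∧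
          x < y k ∧
          (∀ j : Fin (n+1), y j ≤ y k)} = ⋃ k, A k := by
    ext y
    simp only [hA, mem_setOf_eq, mem_iUnion]
    tauto
  -- description of each piece through the "remove coordinate k" equivalence
  set B : Fin (n+1) → Set (ℝ × (Fin n → ℝ)) := fun k =>
    {p : ℝ × (Fin n → ℝ) | p.1 ∈ Ioc x 1 ∧
      ∀ j : Fin n, p.2 j ∈ Icc 0
        (if ((k.succAbove j : Fin (n+1)) : ℕ) < (k:ℕ) then x else p.1)} with hB
  have hAB : ∀ k : Fin (n+1),
      A k = (MeasurableEquiv.piFinSuccAbove (fun _ : Fin (n+1) => ℝ) k) ⁻¹' (B k) := by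
    intro k
    ext y
    simp only [hA, hB, mem_setOf_eq, mem_preimage, MeasurableEquiv.piFinSuccAbove_apply,
      Fin.insertNthEquiv, Equiv.coe_fn_symm_mk, Fin.removeNth, mem_Ioc, mem_Icc]
    constructor
    · rintro ⟨h1, h2, h3, h4⟩
      refine ⟨⟨h3, (h1 k).2⟩, fun j => ?_⟩
      split_ifs with hj
      · exact ⟨(h1 _).1, h2 _ hj⟩
      · exact ⟨(h1 _).1, h4 _⟩
    · rintro ⟨⟨h3, h3'⟩, h5⟩
      have hyk0 : (0:ℝ) ≤ y k := le_of_lt (lt_of_le_of_lt hx0 h3)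
      have h1 : ∀ i, y i ∈ Icc (0:ℝ) 1 := by
        intro i
        rcases eq_or_ne i k with rfl | hik
        · exact ⟨hyk0, h3'⟩
        · obtain ⟨j, rfl⟩ := Fin.exists_succAbove_eq hik
          rcases h5 j with ⟨hj0, hj1⟩
          refine ⟨hj0, ?_⟩
          split_ifs at hj1
          · exact le_trans hj1 hx1
          · exact le_trans hj1 h3'
      refine ⟨h1, fun i hik => ?_, h3, fun i => ?_⟩
      · have hik' : i ≠ k := by
          intro h; rw [h] at hik; exact lt_irrefl _ hik
        obtain ⟨j, rfl⟩ := Fin.exists_succAbove_eq hik'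
        have := (h5 j).2
        rwa [if_pos hik] at this
      · rcases eq_or_ne i k with rfl | hik
        · exact le_refl _
        · obtain ⟨j, rfl⟩ := Fin.exists_succAbove_eq hik
          have := (h5 j).2
          split_ifs at this
          · exact le_trans this (le_of_lt h3)
          · exact this
  have hBmeas : ∀ k : Fin (n+1), MeasurableSet (B k) := by
    intro k
    have : B k = {p : ℝ × (Fin n → ℝ) | p.1 ∈ Ioc x 1} ∩
        ⋂ j : Fin n, {p : ℝ × (Fin n → ℝ) | p.2 j ∈ Icc 0
          (if ((k.succAbove j : Fin (n+1)) : ℕ) < (k:ℕ) then x else p.1)} := by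
      ext p; simp [hB]
    rw [this]
    refine (measurableSet_Ioc.preimage measurable_fst).inter
      (MeasurableSet.iInter fun j => ?_)
    by_cases hj : ((k.succAbove j : Fin (n+1)) : ℕ) < (k:ℕ)
    · simp only [if_pos hj]
      exact measurableSet_Icc.preimage (measurable_snd.eval)
    · simp only [if_neg hj, mem_Icc]
      exact (measurableSet_le measurable_const measurable_snd.eval).inter
        (measurableSet_le measurable_snd.eval measurable_fst)
  have hAmeas : ∀ k : Fin (n+1), MeasurableSet (A k) := fun k => by
    rw [hAB k]
    exact (MeasurableEquiv.piFinSuccAbove (fun _ : Fin (n+1) => ℝ) k).measurable (hBmeas k)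
  -- volume of each piece
  have hAk : ∀ k : Fin (n+1),
      volume (A k) = ENNReal.ofReal
        (x ^ (k:ℕ) * (1 - x ^ (n - (k:ℕ) + 1)) / ((n - (k:ℕ) + 1 : ℕ) : ℝ)) := by
    intro k
    have hkn : (k:ℕ) ≤ n := Nat.lt_succ_iff.1 k.isLt
    rw [hAB k,
      (volume_preserving_piFinSuccAbove (fun _ : Fin (n+1) => ℝ) k).measure_preimage
        (hBmeas k).nullMeasurableSet]
    rw [Measure.volume_eq_prod, Measure.prod_apply (hBmeas k)]
    have hslice : ∀ t : ℝ, volume (Prod.mk t ⁻¹' B k)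
        = Set.indicator (Ioc x 1)
            (fun t => ENNReal.ofReal x ^ (k:ℕ) * ENNReal.ofReal t ^ (n - (k:ℕ))) t := by
      intro t
      by_cases ht : t ∈ Ioc x 1
      · rw [indicator_of_mem ht]
        have hpre : Prod.mk t ⁻¹' B k
            = Set.pi univ (fun j : Fin n => Icc 0
              (if ((k.succAbove j : Fin (n+1)) : ℕ) < (k:ℕ) then x else t)) := by
          ext p
          simp only [hB, mem_preimage, mem_setOf_eq, Set.mem_pi, mem_univ, true_implies]
          exact and_iff_right ht
        rw [hpre, volume_pi_pi]
        have ht0 : (0:ℝ) ≤ t := le_of_lt (lt_of_le_of_lt hx0 ht.1)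
        have : ∀ j : Fin n, volume (Icc (0:ℝ)
            (if ((k.succAbove j : Fin (n+1)) : ℕ) < (k:ℕ) then x else t))
            = if ((k.succAbove j : Fin (n+1)) : ℕ) < (k:ℕ)
              then ENNReal.ofReal x else ENNReal.ofReal t := by
          intro j
          rw [Real.volume_Icc, sub_zero, apply_ite ENNReal.ofReal]
        rw [Finset.prod_congr rfl (fun j _ => this j)]
        rw [Finset.prod_ite, Finset.prod_const, Finset.prod_const]
        have h1 : (Finset.univ.filter fun j : Fin n =>
            ((k.succAbove j : Fin (n+1)) : ℕ) < (k:ℕ))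
            = Finset.univ.filter fun j : Fin n => (j:ℕ) < (k:ℕ) :=
          Finset.filter_congr (fun j _ => aux_succAbove_lt n k j)
        have h2 : (Finset.univ.filter fun j : Fin n =>
            ¬ ((k.succAbove j : Fin (n+1)) : ℕ) < (k:ℕ))
            = Finset.univ.filter fun j : Fin n => ¬ (j:ℕ) < (k:ℕ) :=
          Finset.filter_congr (fun j _ => not_congr (aux_succAbove_lt n k j))
        have h3 : (Finset.univ.filter fun j : Fin n => ¬ (j:ℕ) < (k:ℕ)).card
            = n - (k:ℕ) := by
          have htot := Finset.card_filter_add_card_filter_not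
            (s := (Finset.univ : Finset (Fin n))) (p := fun j : Fin n => (j:ℕ) < (k:ℕ))
          rw [Finset.card_univ, Fintype.card_fin, aux_card_filter_lt n (k:ℕ) hkn] at htot
          omega
        rw [h1, h2, aux_card_filter_lt n (k:ℕ) hkn, h3]
      · rw [indicator_of_notMem ht]
        have : Prod.mk t ⁻¹' B k = ∅ := by
          ext p; simp [hB]
          intro h1 h2; exact absurd ⟨h1, h2⟩ ht
        simp [this]
    calc ∫⁻ t, volume (Prod.mk t ⁻¹' B k)
        = ∫⁻ t, Set.indicator (Ioc x 1)
            (fun t => ENNReal.ofReal x ^ (k:ℕ) * ENNReal.ofReal t ^ (n - (k:ℕ))) t := by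
          exact lintegral_congr hslice
      _ = ∫⁻ t in Ioc x 1,
            ENNReal.ofReal x ^ (k:ℕ) * ENNReal.ofReal t ^ (n - (k:ℕ)) := by
          rw [lintegral_indicator measurableSet_Ioc]
      _ = ENNReal.ofReal x ^ (k:ℕ) * ∫⁻ t in Ioc x 1, ENNReal.ofReal t ^ (n - (k:ℕ)) := by
          rw [lintegral_const_mul]
          exact (ENNReal.measurable_ofReal.comp measurable_id).pow_const _
      _ = ENNReal.ofReal x ^ (k:ℕ)
            * ENNReal.ofReal ((1 - x ^ (n - (k:ℕ) + 1)) / ((n - (k:ℕ) + 1 : ℕ) : ℝ)) := by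
          congr 1
          have hcong : ∫⁻ t in Ioc x 1, ENNReal.ofReal t ^ (n - (k:ℕ))
              = ∫⁻ t in Ioc x 1, ENNReal.ofReal (t ^ (n - (k:ℕ))) := by
            refine lintegral_congr_ae ?_
            filter_upwards [ae_restrict_mem measurableSet_Ioc] with t ht
            rw [ENNReal.ofReal_pow (le_of_lt (lt_of_le_of_lt hx0 ht.1))]
          rw [hcong, ← ofReal_integral_eq_lintegral_ofReal]
          · congr 1
            rw [← intervalIntegral.integral_of_le hx1, integral_pow]
            rw [one_pow]
            push_cast
            ring
          · exact (continuous_pow _).integrableOn_Ioc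
          · filter_upwards [ae_restrict_mem measurableSet_Ioc] with t ht
            exact pow_nonneg (le_of_lt (lt_of_le_of_lt hx0 ht.1)) _
      _ = ENNReal.ofReal
            (x ^ (k:ℕ) * (1 - x ^ (n - (k:ℕ) + 1)) / ((n - (k:ℕ) + 1 : ℕ) : ℝ)) := by
          rw [← ENNReal.ofReal_pow hx0, ← ENNReal.ofReal_mul (pow_nonneg hx0 _)]
          congr 1
          ring
  -- pieces are pairwise disjoint
  have hdisj : Pairwise (Function.onFun Disjoint A) := by
    intro k k' hkk'
    rw [Function.onFun, Set.disjoint_left]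
    intro y hy hy'
    rcases lt_or_gt_of_ne hkk' with h | h
    · exact absurd (hy'.2.1 k (Fin.lt_iff_val_lt_val.1 h)) (not_le.2 hy.2.2.1)
    · exact absurd (hy.2.1 k' (Fin.lt_iff_val_lt_val.1 h)) (not_le.2 hy'.2.2.1)
  rw [hset, measure_iUnion hdisj hAmeas, tsum_fintype]
  -- sum up
  have hterm_nonneg : ∀ m : ℕ,
      0 ≤ x ^ m * (1 - x ^ (n - m + 1)) / ((n - m + 1 : ℕ) : ℝ) := by
    intro m
    apply div_nonneg
    · exact mul_nonneg (pow_nonneg hx0 _) (by nlinarith [pow_le_one₀ hx0 hx1 (n := n - m + 1)])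
    · positivity
  calc ∑ k : Fin (n+1), volume (A k)
      = ∑ k : Fin (n+1), ENNReal.ofReal
          (x ^ (k:ℕ) * (1 - x ^ (n - (k:ℕ) + 1)) / ((n - (k:ℕ) + 1 : ℕ) : ℝ)) := by
        exact Finset.sum_congr rfl fun k _ => hAk k
    _ = ENNReal.ofReal (∑ k : Fin (n+1),
          x ^ (k:ℕ) * (1 - x ^ (n - (k:ℕ) + 1)) / ((n - (k:ℕ) + 1 : ℕ) : ℝ)) := by
        exact (ENNReal.ofReal_sum_of_nonneg (fun (k : Fin (n+1)) _ => hterm_nonneg (k:ℕ))).symm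
    _ = ENNReal.ofReal
        (∑ k ∈ Finset.Icc 1 (n+1),
          x ^ (k - 1) * (1 - x ^ ((n+1) - k + 1)) / (((n+1) - k + 1 : ℕ) : ℝ)) := by
        congr 1
        rw [Fin.sum_univ_eq_sum_range
            (fun i => x ^ i * (1 - x ^ (n - i + 1)) / ((n - i + 1 : ℕ) : ℝ)) (n+1),
          ← Finset.Ico_add_one_right_eq_Icc, Finset.sum_Ico_eq_sum_range]
        have hrange : n + 1 + 1 - 1 = n + 1 := by omega
        rw [hrange]
        refine Finset.sum_congr rfl fun i _ => ?_
        have h1 : 1 + i - 1 = i := by omega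
        have h2 : n + 1 - (1 + i) = n - i := by omega
        rw [h1, h2]
end

section
/- Let N be an integer, let n be an integer with 1 ≤ n < N, and let x ∈ (0,1]. Then x^{N-n} ≥ Σ_{k=n+1}^{N} x^{k-n-1}(1 - x^{N-k+1})/(N-k+1) if and only if Σ_{k=1}^{N-n} (x^{-k} - 1)/k ≤ 1. (That is, for the full-information player the stopping reward s_{2,n}(x) = x^{N-n} dominates the continuation value c_{2,n}(x) exactly on the Gilbert–Mosteller stopping region {x : Σ_{k=1}^{N-n} (x^{-k} - 1)/k ≤ 1}.) -/
/-- For `1 ≤ n < N` and `x ∈ (0,1]`, the stopping reward `x^{N-n}` dominates the continuation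
value `Σ_{k=n+1}^{N} x^{k-n-1}(1 - x^{N-k+1})/(N-k+1)` if and only if
`Σ_{k=1}^{N-n} (x^{-k} - 1)/k ≤ 1`. -/
theorem stmt_5 (N n : ℕ) (hn : 1 ≤ n) (hnN : n < N) (x : ℝ) (hx : x ∈ Set.Ioc (0:ℝ) 1) :
    x ^ (N - n) ≥
        ∑ k ∈ Finset.Icc (n + 1) N,
          x ^ (k - n - 1) * (1 - x ^ (N - k + 1)) / ((N - k + 1 : ℕ) : ℝ) ↔
      ∑ k ∈ Finset.Icc 1 (N - n), (x ^ (-(k : ℤ)) - 1) / (k : ℝ) ≤ 1 := by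
  obtain ⟨hx0, hx1⟩ := hx
  set m := N - n with hm
  have hsum : ∑ k ∈ Finset.Icc (n + 1) N,
      x ^ (k - n - 1) * (1 - x ^ (N - k + 1)) / ((N - k + 1 : ℕ) : ℝ)
      = ∑ j ∈ Finset.Icc 1 m, x ^ (m - j) * (1 - x ^ j) / (j : ℝ) := by
    apply Finset.sum_nbij' (fun k => N + 1 - k) (fun j => N + 1 - j)
    · intro k hk; simp only [Finset.mem_Icc] at *; omega
    · intro j hj; simp only [Finset.mem_Icc] at *; omega
    · intro k hk; simp only [Finset.mem_Icc] at hk; omega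
    · intro j hj; simp only [Finset.mem_Icc] at hj; omega
    · intro k hk
      simp only [Finset.mem_Icc] at hk
      have h1 : k - n - 1 = m - (N + 1 - k) := by omega
      have h2 : N - k + 1 = N + 1 - k := by omega
      rw [h1, h2]
  rw [hsum, ge_iff_le]
  have hxm : (0 : ℝ) < x ^ m := pow_pos hx0 m
  have key : ∑ j ∈ Finset.Icc 1 m, x ^ (m - j) * (1 - x ^ j) / (j : ℝ)
      = x ^ m * ∑ j ∈ Finset.Icc 1 m, (x ^ (-(j : ℤ)) - 1) / (j : ℝ) := by
    rw [Finset.mul_sum]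
    refine Finset.sum_congr rfl fun j hj => ?_
    simp only [Finset.mem_Icc] at hj
    have hxj : x ^ j ≠ 0 := pow_ne_zero _ (ne_of_gt hx0)
    have hj0 : (j : ℝ) ≠ 0 := Nat.cast_ne_zero.mpr (by omega)
    have hms : x ^ (m - j) * x ^ j = x ^ m := by rw [← pow_add]; congr 1; omega
    rw [zpow_neg, zpow_natCast]
    field_simp
    linear_combination (1 - x ^ j) * hms
  rw [key]
  exact mul_le_iff_le_one_right hxm
end

section
/- Let j, k be integers with 1 ≤ j ≤ k-1 and let x ∈ (0,1]. Then (j/k)·x^{-k} - x^{-j}/(k-j) + 1/k ≥ 0. -/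
/-- For integers `1 ≤ j < k` and `x ∈ (0,1]`: `(j/k)·x^{-k} - x^{-j}/(k-j) + 1/k ≥ 0`. -/
theorem stmt_11 (j k : ℕ) (hj : 1 ≤ j) (hjk : j < k) (x : ℝ) (hx : x ∈ Set.Ioc (0:ℝ) 1) :
    (j : ℝ) / k * x ^ (-(k : ℤ)) - x ^ (-(j : ℤ)) / ((k : ℝ) - j) + 1 / k ≥ 0 := by
  obtain ⟨hx0, hx1⟩ := hx
  set t : ℝ := x⁻¹ with htdef
  have ht0 : 0 < t := inv_pos.mpr hx0
  have ht1 : 1 ≤ t := one_le_inv_iff₀.mpr ⟨hx0, hx1⟩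
  have hxk : x ^ (-(k : ℤ)) = t ^ k := by
    rw [zpow_neg, zpow_natCast, htdef, inv_pow]
  have hxj : x ^ (-(j : ℤ)) = t ^ j := by
    rw [zpow_neg, zpow_natCast, htdef, inv_pow]
  rw [hxk, hxj]
  have hkpos : (0:ℝ) < k := by exact_mod_cast Nat.pos_of_ne_zero (by omega)
  have hjr : (1:ℝ) ≤ j := by exact_mod_cast hj
  have hc : (1:ℝ) ≤ (k:ℝ) - j := by
    have : (j:ℝ) + 1 ≤ k := by exact_mod_cast hjk
    linarith
  have hc0 : (0:ℝ) < (k:ℝ) - j := by linarith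
  -- weighted AM-GM : t^j ≤ (j/k) * t^k + ((k-j)/k)
  have key : (t:ℝ) ^ j ≤ (j/k) * t^k + ((k:ℝ)-j)/k := by
    have hw1 : (0:ℝ) ≤ (j:ℝ)/k := by positivity
    have hw2 : (0:ℝ) ≤ ((k:ℝ)-j)/k := by positivity
    have hp1 : (0:ℝ) ≤ t^k := by positivity
    have hw : (j:ℝ)/k + ((k:ℝ)-j)/k = 1 := by field_simp; ring
    have h := Real.geom_mean_le_arith_mean2_weighted hw1 hw2 hp1 zero_le_one hw
    have hL : (t^k) ^ ((j:ℝ)/k) * (1:ℝ) ^ (((k:ℝ)-j)/k) = t ^ j := by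
      rw [Real.one_rpow, mul_one, ← Real.rpow_natCast t k, ← Real.rpow_mul ht0.le]
      rw [show (k:ℝ) * ((j:ℝ)/k) = (j:ℝ) by field_simp]
      exact Real.rpow_natCast t j
    rw [hL, mul_one] at h
    linarith
  have h1 : (k:ℝ) * t^j ≤ (j:ℝ) * ((k:ℝ)-j) * t^k + ((k:ℝ)-j) := by
    have hk' : (k:ℝ) * t^j ≤ (j:ℝ) * t^k + ((k:ℝ)-j) := by
      have := mul_le_mul_of_nonneg_left key hkpos.le
      field_simp at this
      linarith
    have hfact : (0:ℝ) ≤ (j:ℝ) * t^k * ((k:ℝ) - j - 1) := by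
      apply mul_nonneg
      · positivity
      · linarith
    nlinarith [hfact]
  have heq : (j:ℝ) / k * t^k - t^j / ((k:ℝ)-j) + 1/k
      = ((j:ℝ) * ((k:ℝ)-j) * t^k - (k:ℝ) * t^j + ((k:ℝ)-j)) / ((k:ℝ) * ((k:ℝ)-j)) := by
    field_simp
  rw [ge_iff_le, heq]
  apply div_nonneg
  · linarith
  · positivity
end

section
/- Let m be an integer with m ≥ 1, let p be a real number with 0 ≤ p ≤ 1/2, and let x ∈ (0,1]. Then 2p · Σ_{k=1}^{m} (x^{-k} - 1)/k ≥ -(1-2p) · Σ_{k=1}^{m} Σ_{j=1}^{k-1} ( (j/k)·x^{-k} - x^{-j}/(k-j) + 1/k ). (With m = N-n this is the condition Tv_{2,n}(x) ≤ w_{2,n}(x) verifying that the full-information player does not change his strategy at the profile (Forgo, Stop) for n < n* and x > x_n, so that (F,S) is a pure Nash equilibrium there.) -/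
lemma bern (y : ℝ) (hy : 0 ≤ y) (n : ℕ) : 1 - y^n ≤ n * (1 - y) := by
  have h := one_add_mul_le_pow (by linarith : (-2:ℝ) ≤ y - 1) n
  have e : (1 + (y-1)) = y := by ring
  rw [e] at h; linarith

lemma geo (y : ℝ) (hy0 : 0 ≤ y) (hy1 : y ≤ 1) (n : ℕ) : n * y^n * (1-y) ≤ 1 - y^n := by
  have h1 : (∑ i ∈ Finset.range n, y ^ i) * (y - 1) = y ^ n - 1 := geom_sum_mul y n
  have h2 : (n:ℝ) * y^n ≤ ∑ i ∈ Finset.range n, y ^ i := by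
    calc (n:ℝ) * y^n = ∑ _i ∈ Finset.range n, y^n := by simp [mul_comm]
    _ ≤ _ := Finset.sum_le_sum fun i hi =>
        pow_le_pow_of_le_one hy0 hy1 (Finset.mem_range.mp hi).le
  nlinarith [h2]

-- key: a j ≥ 1 naturals, y ∈ (0,1]: (a+j) y^a ≤ a j + a y^(a+j)
lemma key (a j : ℕ) (ha : 1 ≤ a) (hj : 1 ≤ j) (y : ℝ) (hy0 : 0 ≤ y) (hy1 : y ≤ 1) :
    ((a:ℝ) + j) * y^a ≤ a * j + a * y^(a+j) := by
  have hA := bern y hy0 j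
  have hB := geo y hy0 hy1 a
  have hya : (0:ℝ) ≤ y^a := pow_nonneg hy0 a
  have hya1 : y^a ≤ 1 := pow_le_one₀ hy0 hy1
  have hpow : y^(a+j) = y^a * y^j := pow_add y a j
  have ha1 : (1:ℝ) ≤ a := by exact_mod_cast ha
  have hj1 : (1:ℝ) ≤ j := by exact_mod_cast hj
  -- goal ⇔ j(a - y^a) ≥ a y^a (1 - y^j)
  nlinarith [mul_le_mul_of_nonneg_left hA (mul_nonneg (by positivity : (0:ℝ) ≤ (a:ℝ)) hya),
    mul_le_mul_of_nonneg_left hB (by linarith : (0:ℝ) ≤ (j:ℝ))]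

lemma term_nonneg (k j : ℕ) (hj : 1 ≤ j) (hjk : j < k) (x : ℝ) (hx0 : 0 < x) (hx1 : x ≤ 1) :
    0 ≤ (j:ℝ)/k * x^(-(k:ℤ)) - x^(-(j:ℤ))/((k:ℝ)-j) + 1/k := by
  obtain ⟨a, ha, hk⟩ : ∃ a, 1 ≤ a ∧ k = j + a := ⟨k - j, by omega, by omega⟩
  have key' := key a j ha hj x hx0.le hx1
  rw [zpow_neg, zpow_neg, zpow_natCast, zpow_natCast]
  have hkr : (k:ℝ) = (j:ℝ) + a := by rw [hk]; push_cast; ring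
  have hkpos : (0:ℝ) < k := by exact_mod_cast Nat.pos_of_ne_zero (by omega)
  have hxk : (0:ℝ) < x^k := by positivity
  have hxj : (0:ℝ) < x^j := by positivity
  have hapos : (0:ℝ) < a := by exact_mod_cast ha
  have hkr' : (k:ℝ) - j = a := by rw [hkr]; ring
  rw [hkr']
  have hsplit : x^k = x^j * x^a := by rw [hk, pow_add]
  have heq : (j:ℝ)/k * (x^k)⁻¹ - (x^j)⁻¹/(a:ℝ) + 1/k
      = ((a:ℝ)*j + a*x^k - k*x^a)/((k:ℝ)*a*x^k) := by
    rw [hsplit]; field_simp; ring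
  rw [heq]
  apply div_nonneg _ (by positivity)
  have hpk : x^(a+j) = x^k := by rw [hk, add_comm]
  have key2 : (k:ℝ)*x^a ≤ (a:ℝ)*j + a*x^k :=
    calc (k:ℝ)*x^a = ((a:ℝ)+j)*x^a := by rw [hkr]; ring
    _ ≤ (a:ℝ)*j + a*x^(a+j) := key'
    _ = (a:ℝ)*j + a*x^k := by rw [hpk]
  linarith

/-- For `m ≥ 1`, `0 ≤ p ≤ 1/2` and `x ∈ (0,1]`:
`2p · Σ_{k=1}^{m} (x^{-k} - 1)/k ≥
  -(1-2p) · Σ_{k=1}^{m} Σ_{j=1}^{k-1} ((j/k)·x^{-k} - x^{-j}/(k-j) + 1/k)`. -/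
theorem stmt_12 (m : ℕ) (hm : 1 ≤ m) (p : ℝ) (hp0 : 0 ≤ p) (hp : p ≤ 1 / 2)
    (x : ℝ) (hx : x ∈ Set.Ioc (0:ℝ) 1) :
    2 * p * ∑ k ∈ Finset.Icc 1 m, (x ^ (-(k : ℤ)) - 1) / (k : ℝ) ≥
      -(1 - 2 * p) *
        ∑ k ∈ Finset.Icc 1 m, ∑ j ∈ Finset.Icc 1 (k - 1),
          ((j : ℝ) / k * x ^ (-(k : ℤ)) - x ^ (-(j : ℤ)) / ((k : ℝ) - j) + 1 / k) := by
  obtain ⟨hx0, hx1⟩ := hx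
  have hL : 0 ≤ 2 * p * ∑ k ∈ Finset.Icc 1 m, (x ^ (-(k : ℤ)) - 1) / (k : ℝ) := by
    apply mul_nonneg (by linarith)
    apply Finset.sum_nonneg
    intro k hk
    obtain ⟨hk1, _⟩ := Finset.mem_Icc.mp hk
    apply div_nonneg _ (by positivity)
    rw [zpow_neg, zpow_natCast, sub_nonneg]
    exact one_le_inv_iff₀.mpr ⟨by positivity, pow_le_one₀ hx0.le hx1⟩
  have hS : 0 ≤ ∑ k ∈ Finset.Icc 1 m, ∑ j ∈ Finset.Icc 1 (k - 1),
      ((j : ℝ) / k * x ^ (-(k : ℤ)) - x ^ (-(j : ℤ)) / ((k : ℝ) - j) + 1 / k) := by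
    apply Finset.sum_nonneg; intro k hk
    apply Finset.sum_nonneg; intro j hj
    obtain ⟨hj1, hj2⟩ := Finset.mem_Icc.mp hj
    obtain ⟨hk1, _⟩ := Finset.mem_Icc.mp hk
    exact term_nonneg k j hj1 (by omega) x hx0 hx1
  nlinarith [mul_nonneg (by linarith : (0:ℝ) ≤ 1 - 2*p) hS]
end
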